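/- arXiv:2206.08571 — 2 statements merged into one kernel-verified Lean document; each statement's English description precedes it below -/
import Mathlib

section
/- For every s ≥ 0, the following two integral bounds hold: ∫_s^∞ ∫_s^∞ Ai(x+y)² dx dy ≤ (1/4)·e^{-4s}, and ∫_s^∞ ∫_s^∞ e^{y}·Ai(x+y)² dx dy ≤ (1/2)·e^{-3s}. In particular, the Hilbert–Schmidt norm of the kernel K(x,y) = 1_{x>s}1_{y>s}Ai(x+y) is at most (1/2)e^{-2s}, and that of the weighted kernel K̄(x,y) = 1_{x>s}1_{y>s}Ai(x+y)e^{y/2} is at most e^{-s}. -/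
/-! Shifting the contour of `∫ exp (i (t³/3 + x t)) dt` from `ℝ` to the line `Im t = 1` (the
integrand is entire and its integrals over the vertical sides of the rectangle vanish) turns the
oscillatory integral defining `Ai` into an absolutely convergent one whose integrand has modulus
`exp (1/3 - x - u²)`. This gives `|Ai x| ≤ e^{1/3} √π e^{-x} / (2π) ≤ e^{-x}`, hence
`Ai (x + y)² ≤ e^{-2x} e^{-2y}`, and all four bounds follow by Tonelli from
`∫_s^∞ e^{-a x} dx = e^{-a s} / a`. -/

open MeasureTheory Real Filter

/-- The Airy function, defined for `x ∈ ℝ` by the convergent improper integral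
`Ai(x) = (1/π) lim_{T→∞} ∫₀ᵀ cos(t³/3 + x t) dt`. -/
noncomputable def Ai (x : ℝ) : ℝ :=
  limUnder Filter.atTop
    (fun T : ℝ => (1 / Real.pi) * ∫ t in (0 : ℝ)..T, Real.cos (t ^ 3 / 3 + x * t))

/-- The Hilbert–Schmidt norm `(∫∫ K(x,y)² dx dy)^{1/2}` of a kernel on `ℝ²`. -/
noncomputable def HSnorm (K : ℝ → ℝ → ℝ) : ℝ :=
  Real.sqrt (∫⁻ p : ℝ × ℝ, ENNReal.ofReal (K p.1 p.2 ^ 2)).toReal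

open Complex Set Topology

theorem tendsto_intervalIntegral_of_vertical_shift {f : ℂ → ℂ} (hf : Differentiable ℂ f)
    {c : ℝ} (hint : Integrable fun u : ℝ => f (u + c * I))
    (hside : Tendsto (fun w : ℝ => ∫ y in (0 : ℝ)..c, f (w + y * I)) (cocompact ℝ) (𝓝 0)) :
    Tendsto (fun T : ℝ => ∫ u in -T..T, f u) atTop (𝓝 (∫ u : ℝ, f (u + c * I))) := by
  have hrect : ∀ T : ℝ, ∫ u in -T..T, f u = (∫ u in -T..T, f (u + c * I))
      - I • (∫ y in (0 : ℝ)..c, f (T + y * I)) + I • ∫ y in (0 : ℝ)..c, f ((-T : ℝ) + y * I) := by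
    intro T
    have h := integral_boundary_rect_eq_zero_of_differentiableOn f (-T : ℝ) (T + c * I)
      hf.differentiableOn
    simp only [add_re, ofReal_re, mul_re, I_re, I_im, ofReal_im, add_im, mul_im, mul_zero,
      mul_one, sub_zero, zero_add, add_zero, ofReal_zero, zero_mul] at h
    linear_combination h
  have hshift := intervalIntegral_tendsto_integral hint tendsto_neg_atTop_atBot tendsto_id
  have hright := (hside.comp atTop_le_cocompact).const_smul I
  have hleft := ((hside.comp atBot_le_cocompact).comp tendsto_neg_atTop_atBot).const_smul I
  simpa only [smul_zero, sub_zero, add_zero] using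
    ((hshift.sub hright).add hleft).congr fun T => (hrect T).symm

noncomputable def airyExp (x : ℝ) (z : ℂ) : ℂ := cexp (I * (z ^ 3 / 3 + x * z))

theorem differentiable_airyExp (x : ℝ) : Differentiable ℂ (airyExp x) := by
  unfold airyExp; fun_prop

theorem norm_airyExp (x u v : ℝ) :
    ‖airyExp x (u + v * I)‖ = rexp (-(v * u ^ 2) + v ^ 3 / 3 - x * v) := by
  rw [airyExp, norm_exp]
  congr 1
  simp only [pow_succ, pow_zero, one_mul, mul_re, I_re, add_re, div_ofNat_re, ofReal_re, mul_zero,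
    ofReal_im, I_im, mul_one, sub_self, add_zero, add_im, mul_im, zero_add, zero_mul, sub_zero,
    div_ofNat_im, zero_sub, neg_add_rev]
  ring

theorem re_airyExp_ofReal (x u : ℝ) : (airyExp x u).re = Real.cos (u ^ 3 / 3 + x * u) := by
  rw [airyExp, ← exp_ofReal_mul_I_re]
  congr 2
  push_cast
  ring

theorem re_intervalIntegral_airyExp (x T : ℝ) :
    (∫ u in -T..T, airyExp x u).re = 2 * ∫ t in (0 : ℝ)..T, Real.cos (t ^ 3 / 3 + x * t) := by
  have hcont : Continuous fun u : ℝ => Real.cos (u ^ 3 / 3 + x * u) := by fun_prop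
  have hre : (∫ u in -T..T, airyExp x u).re = ∫ u in -T..T, (airyExp x u).re :=
    (reCLM.intervalIntegral_comp_comm
      (((differentiable_airyExp x).continuous.comp continuous_ofReal).intervalIntegrable _ _)).symm
  simp only [hre, re_airyExp_ofReal]
  rw [← intervalIntegral.integral_add_adjacent_intervals (hcont.intervalIntegrable _ 0)
    (hcont.intervalIntegrable 0 T), ← neg_zero, ← intervalIntegral.integral_comp_neg, neg_zero,
    two_mul]
  congr 1
  refine intervalIntegral.integral_congr fun u _ => ?_
  rw [← Real.cos_neg]
  ring_nf

theorem integrable_airyExp_shift (x : ℝ) {c : ℝ} (hc : 0 < c) :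
    Integrable fun u : ℝ => airyExp x (u + c * I) := by
  refine ((integrable_exp_neg_mul_sq hc).const_mul (rexp (c ^ 3 / 3 - x * c))).mono'
    (((differentiable_airyExp x).continuous.comp (by fun_prop)).aestronglyMeasurable) ?_
  refine .of_forall fun u => le_of_eq ?_
  rw [norm_airyExp, ← Real.exp_add]
  ring_nf

theorem intervalIntegral_exp_neg_mul_le {k c : ℝ} (hk : 0 < k) (hc : 0 ≤ c) :
    ∫ y in (0 : ℝ)..c, rexp (-(k * y)) ≤ 1 / k := by
  have hint : IntegrableOn (fun y => rexp (-(k * y))) (Ioi 0) := by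
    simpa only [neg_mul] using exp_neg_integrableOn_Ioi 0 hk
  rw [intervalIntegral.integral_of_le hc]
  calc ∫ y in Ioc 0 c, rexp (-(k * y))
      ≤ ∫ y in Ioi 0, rexp (-(k * y)) :=
        setIntegral_mono_set hint (.of_forall fun _ => (Real.exp_pos _).le)
          Ioc_subset_Ioi_self.eventuallyLE
    _ = 1 / k := by
        simp_rw [← neg_mul]
        rw [integral_exp_mul_Ioi (neg_lt_zero.2 hk)]
        simp

theorem norm_intervalIntegral_airyExp_vertical_le (x : ℝ) {c w : ℝ} (hc : 0 ≤ c) (hw : w ≠ 0) :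
    ‖∫ y in (0 : ℝ)..c, airyExp x (w + y * I)‖ ≤ rexp (c ^ 3 / 3 + |x| * c) / w ^ 2 := by
  have hbound : ∀ y ∈ Ioc 0 c, ‖airyExp x (w + y * I)‖
      ≤ rexp (c ^ 3 / 3 + |x| * c) * rexp (-(w ^ 2 * y)) := by
    rintro y ⟨hy0, hyc⟩
    rw [norm_airyExp, ← Real.exp_add]
    gcongr
    have : y ^ 3 ≤ c ^ 3 := by gcongr
    nlinarith [neg_abs_le x, abs_nonneg x]
  calc ‖∫ y in (0 : ℝ)..c, airyExp x (w + y * I)‖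
      ≤ ∫ y in (0 : ℝ)..c, rexp (c ^ 3 / 3 + |x| * c) * rexp (-(w ^ 2 * y)) :=
        intervalIntegral.norm_integral_le_of_norm_le hc (.of_forall hbound)
          (Continuous.intervalIntegrable (by fun_prop) _ _)
    _ ≤ rexp (c ^ 3 / 3 + |x| * c) * (1 / w ^ 2) := by
        rw [intervalIntegral.integral_const_mul]
        gcongr
        exact intervalIntegral_exp_neg_mul_le (by positivity) hc
    _ = rexp (c ^ 3 / 3 + |x| * c) / w ^ 2 := mul_one_div _ _

theorem tendsto_intervalIntegral_airyExp_vertical (x : ℝ) {c : ℝ} (hc : 0 ≤ c) :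
    Tendsto (fun w : ℝ => ∫ y in (0 : ℝ)..c, airyExp x (w + y * I)) (cocompact ℝ) (𝓝 0) := by
  have hsq : Tendsto (fun w : ℝ => w ^ 2) (cocompact ℝ) atTop := by
    simpa only [Function.comp_def, Real.norm_eq_abs, sq_abs] using
      (tendsto_pow_atTop two_ne_zero).comp (tendsto_norm_cocompact_atTop (E := ℝ))
  refine squeeze_zero_norm' ?_
    ((tendsto_const_nhds (x := rexp (c ^ 3 / 3 + |x| * c))).div_atTop hsq)
  filter_upwards [hsq.eventually_gt_atTop 0] with w hw
  exact norm_intervalIntegral_airyExp_vertical_le x hc (by rintro rfl; simp at hw)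

theorem Ai_eq_re_integral_airyExp (x : ℝ) {c : ℝ} (hc : 0 < c) :
    Ai x = (2 * π)⁻¹ * (∫ u : ℝ, airyExp x (u + c * I)).re := by
  refine Tendsto.limUnder_eq ?_
  have h := ((continuous_re.tendsto _).comp (tendsto_intervalIntegral_of_vertical_shift
    (differentiable_airyExp x) (integrable_airyExp_shift x hc)
    (tendsto_intervalIntegral_airyExp_vertical x hc.le))).const_mul (2 * π)⁻¹
  refine h.congr fun T => ?_
  simp only [Function.comp_apply, re_intervalIntegral_airyExp]
  field_simp

theorem abs_Ai_le_exp_neg (x : ℝ) : |Ai x| ≤ rexp (-x) := by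
  have hnorm (u : ℝ) :
      ‖airyExp x (u + (1 : ℝ) * I)‖ = rexp (1 / 3 - x) * rexp (-1 * u ^ 2) := by
    rw [norm_airyExp, ← Real.exp_add]
    ring_nf
  have hJ : ‖∫ u : ℝ, airyExp x (u + (1 : ℝ) * I)‖ ≤ rexp (1 / 3 - x) * √π := by
    refine (MeasureTheory.norm_integral_le_integral_norm _).trans_eq ?_
    simp_rw [hnorm, MeasureTheory.integral_const_mul, integral_gaussian, div_one]
  have he : rexp (1 / 3) ≤ 3 / 2 := by
    have := Real.exp_bound_div_one_sub_of_interval (x := 1 / 3) (by norm_num) (by norm_num)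
    norm_num at this ⊢; exact this
  have hsqrt : √π ≤ π := (Real.sqrt_le_left pi_pos.le).2 (by nlinarith [pi_gt_three])
  calc |Ai x| = (2 * π)⁻¹ * |(∫ u : ℝ, airyExp x (u + (1 : ℝ) * I)).re| := by
        rw [Ai_eq_re_integral_airyExp x one_pos, abs_mul, abs_of_pos (by positivity)]
    _ ≤ (2 * π)⁻¹ * (rexp (1 / 3) * rexp (-x) * √π) := by
        gcongr
        rw [← Real.exp_add, ← sub_eq_add_neg]
        exact (abs_re_le_norm _).trans hJ
    _ ≤ (2 * π)⁻¹ * (3 / 2 * rexp (-x) * π) := by gcongr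
    _ = 3 / 4 * rexp (-x) := by field_simp; ring
    _ ≤ rexp (-x) := by linarith [Real.exp_pos (-x)]

theorem Ai_add_sq_le (x y : ℝ) : Ai (x + y) ^ 2 ≤ rexp (-(2 * x)) * rexp (-(2 * y)) := by
  calc Ai (x + y) ^ 2 = |Ai (x + y)| ^ 2 := (sq_abs _).symm
    _ ≤ rexp (-(x + y)) ^ 2 := by gcongr; exact abs_Ai_le_exp_neg _
    _ = rexp (-(2 * x)) * rexp (-(2 * y)) := by rw [← Real.exp_nat_mul, ← Real.exp_add]; ring_nf

theorem exp_mul_Ai_add_sq_le (x y : ℝ) :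
    rexp y * Ai (x + y) ^ 2 ≤ rexp (-(2 * x)) * rexp (-(1 * y)) := by
  calc rexp y * Ai (x + y) ^ 2 ≤ rexp y * (rexp (-(2 * x)) * rexp (-(2 * y))) := by
        gcongr; exact Ai_add_sq_le x y
    _ = rexp (-(2 * x)) * rexp (-(1 * y)) := by simp only [← Real.exp_add]; ring_nf

section ExpMajorant

variable {s a b : ℝ}

theorem lintegral_Ioi_exp_neg_mul (ha : 0 < a) :
    ∫⁻ x in Ioi s, ENNReal.ofReal (rexp (-(a * x))) = ENNReal.ofReal (rexp (-(a * s)) / a) := by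
  have hint := exp_neg_integrableOn_Ioi s ha
  simp_rw [← neg_mul] at hint ⊢
  rw [← ofReal_integral_eq_lintegral_ofReal hint (.of_forall fun _ => (Real.exp_pos _).le),
    integral_exp_mul_Ioi (neg_lt_zero.2 ha), neg_div_neg_eq]

theorem lintegral_Ioi_mul_lintegral_Ioi_exp (ha : 0 < a) (hb : 0 < b) :
    (∫⁻ x in Ioi s, ENNReal.ofReal (rexp (-(a * x)))) *
        ∫⁻ y in Ioi s, ENNReal.ofReal (rexp (-(b * y))) =
      ENNReal.ofReal (rexp (-((a + b) * s)) / (a * b)) := by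
  rw [lintegral_Ioi_exp_neg_mul ha, lintegral_Ioi_exp_neg_mul hb,
    ← ENNReal.ofReal_mul (by positivity), div_mul_div_comm, ← Real.exp_add]
  ring_nf

theorem lintegral_Ioi_lintegral_Ioi_le_of_le_exp {F : ℝ → ℝ → ℝ} (ha : 0 < a) (hb : 0 < b)
    (hF : ∀ x > s, ∀ y > s, F x y ≤ rexp (-(a * x)) * rexp (-(b * y))) :
    ∫⁻ x in Ioi s, ∫⁻ y in Ioi s, ENNReal.ofReal (F x y) ≤
      ENNReal.ofReal (rexp (-((a + b) * s)) / (a * b)) := by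
  calc ∫⁻ x in Ioi s, ∫⁻ y in Ioi s, ENNReal.ofReal (F x y)
      ≤ ∫⁻ x in Ioi s, ∫⁻ y in Ioi s,
          ENNReal.ofReal (rexp (-(a * x))) * ENNReal.ofReal (rexp (-(b * y))) := by
        refine setLIntegral_mono' measurableSet_Ioi fun x hx => ?_
        refine setLIntegral_mono' measurableSet_Ioi fun y hy => ?_
        rw [← ENNReal.ofReal_mul (Real.exp_pos _).le]
        exact ENNReal.ofReal_le_ofReal (hF x hx y hy)
    _ = _ := by
        rw [lintegral_lintegral_mul (by fun_prop) (by fun_prop),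
          lintegral_Ioi_mul_lintegral_Ioi_exp ha hb]

theorem lintegral_sq_ite_le_of_sq_le_exp {k : ℝ → ℝ → ℝ} (ha : 0 < a) (hb : 0 < b)
    (hk : ∀ x > s, ∀ y > s, k x y ^ 2 ≤ rexp (-(a * x)) * rexp (-(b * y))) :
    ∫⁻ p : ℝ × ℝ, ENNReal.ofReal ((if s < p.1 ∧ s < p.2 then k p.1 p.2 else 0) ^ 2) ≤
      ENNReal.ofReal (rexp (-((a + b) * s)) / (a * b)) := by
  calc ∫⁻ p : ℝ × ℝ, ENNReal.ofReal ((if s < p.1 ∧ s < p.2 then k p.1 p.2 else 0) ^ 2)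
      ≤ ∫⁻ p : ℝ × ℝ, (Ioi s ×ˢ Ioi s).indicator
          (fun p => ENNReal.ofReal (rexp (-(a * p.1))) * ENNReal.ofReal (rexp (-(b * p.2)))) p := by
        refine lintegral_mono fun p => ?_
        by_cases hp : s < p.1 ∧ s < p.2
        · rw [if_pos hp, indicator_of_mem (show p ∈ Ioi s ×ˢ Ioi s from hp),
            ← ENNReal.ofReal_mul (Real.exp_pos _).le]
          exact ENNReal.ofReal_le_ofReal (hk _ hp.1 _ hp.2)
        · simp [if_neg hp]
    _ = _ := by
        rw [lintegral_indicator (measurableSet_Ioi.prod measurableSet_Ioi),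
          Measure.volume_eq_prod, ← Measure.prod_restrict,
          lintegral_prod_mul (f := fun x => ENNReal.ofReal (rexp (-(a * x))))
            (g := fun y => ENNReal.ofReal (rexp (-(b * y)))) (by fun_prop) (by fun_prop),
          lintegral_Ioi_mul_lintegral_Ioi_exp ha hb]

end ExpMajorant

theorem HSnorm_le_of_lintegral_le {K : ℝ → ℝ → ℝ} {r : ℝ} (hr : 0 ≤ r)
    (hK : ∫⁻ p : ℝ × ℝ, ENNReal.ofReal (K p.1 p.2 ^ 2) ≤ ENNReal.ofReal (r ^ 2)) :
    HSnorm K ≤ r :=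
  (Real.sqrt_le_left hr).2 (ENNReal.toReal_le_of_le_ofReal (by positivity) hK)

/-- Lemma 3.8: Airy kernel integral bounds
`∫_s^∞∫_s^∞ Ai(x+y)² ≤ e^{-4s}/4` and `∫_s^∞∫_s^∞ e^y Ai(x+y)² ≤ e^{-3s}/2`; in
particular the Hilbert–Schmidt norms of `K(x,y) = 1_{x>s}1_{y>s}Ai(x+y)` and of
`K̄(x,y) = 1_{x>s}1_{y>s}Ai(x+y)e^{y/2}` are at most `e^{-2s}/2` and `e^{-s}`. -/
theorem airy_kernel_HS_bounds (s : ℝ) (hs : 0 ≤ s) :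
    (∫⁻ x in Set.Ioi s, ∫⁻ y in Set.Ioi s, ENNReal.ofReal (Ai (x + y) ^ 2)) ≤
      ENNReal.ofReal (1 / 4 * Real.exp (-4 * s)) ∧
    (∫⁻ x in Set.Ioi s, ∫⁻ y in Set.Ioi s,
        ENNReal.ofReal (Real.exp y * Ai (x + y) ^ 2)) ≤
      ENNReal.ofReal (1 / 2 * Real.exp (-3 * s)) ∧
    HSnorm (fun x y => if s < x ∧ s < y then Ai (x + y) else 0) ≤
      1 / 2 * Real.exp (-2 * s) ∧
    HSnorm (fun x y => if s < x ∧ s < y then Ai (x + y) * Real.exp (y / 2) else 0) ≤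
      Real.exp (-s) := by
  have hK_sq : rexp (-((2 + 2) * s)) / (2 * 2) = (1 / 2 * rexp (-2 * s)) ^ 2 := by
    rw [mul_pow, ← Real.exp_nat_mul]; ring_nf
  have hKbar_le : rexp (-((2 + 1) * s)) / (2 * 1) ≤ rexp (-s) ^ 2 := by
    rw [← Real.exp_nat_mul, div_le_iff₀ (by norm_num)]
    calc rexp (-((2 + 1) * s)) ≤ rexp (((2 : ℕ) : ℝ) * -s) := by gcongr; push_cast; linarith
      _ ≤ _ := by linarith [Real.exp_pos (((2 : ℕ) : ℝ) * -s)]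
  have hexp_sq (x y : ℝ) : (Ai (x + y) * rexp (y / 2)) ^ 2 = rexp y * Ai (x + y) ^ 2 := by
    rw [mul_pow, ← Real.exp_nat_mul]; ring_nf
  refine ⟨?_, ?_, ?_, ?_⟩
  · convert lintegral_Ioi_lintegral_Ioi_le_of_le_exp two_pos two_pos
      fun x _ y _ => Ai_add_sq_le x y using 2
    ring_nf
  · convert lintegral_Ioi_lintegral_Ioi_le_of_le_exp two_pos one_pos
      fun x _ y _ => exp_mul_Ai_add_sq_le x y using 2
    ring_nf
  · refine HSnorm_le_of_lintegral_le (by positivity) ?_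
    rw [← hK_sq]
    exact lintegral_sq_ite_le_of_sq_le_exp two_pos two_pos fun x _ y _ => Ai_add_sq_le x y
  · refine HSnorm_le_of_lintegral_le (by positivity) ?_
    refine (lintegral_sq_ite_le_of_sq_le_exp (k := fun x y => Ai (x + y) * rexp (y / 2))
      two_pos one_pos fun x _ y _ => ?_).trans (ENNReal.ofReal_le_ofReal hKbar_le)
    rw [hexp_sq]
    exact exp_mul_Ai_add_sq_le x y
end

section
/- For all s₁, s₂ ≥ 0 and all u > 0, one has ∫_{s₂}^∞ ∫_{s₁}^∞ Ai(x+y+u²)²·e^{-2(x+y)u − 4u³/3} dy dx ≤ (1/(4u³))·e^{-4(s₁+s₂)u − 8u³/3}; equivalently, the Hilbert–Schmidt norm of the kernel K_{2,1}(x,y) = 1_{x>s₂}1_{y>s₁}Ai(x+y+u²)e^{-(x+y)u − 2u³/3} is at most (1/(2u^{3/2}))·e^{-2(s₁+s₂)u − 4u³/3}. -/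
/-!
Shifting the contour of the Airy integral to the line `Im z = v > 0` (the vertical sides of
the rectangles `[-T, T] × [0, v]` contribute `O(1/T²)`) gives `Ai x = Re ∫ f(t + v i) dt / 2π`,
where `f z = exp (i (z³/3 + x z))` has modulus `exp (v³/3 - x v - v t²)` on that line, a
Gaussian in `t`. Hence `Ai x ² ≤ exp (2 (v³/3 - x v)) / (4 π v)`. Taking `v = u`, the integrand
of the double integral is at most `exp (-8u³/3 - 4u (x + y)) / (4 π u)`, whose integral over
the quadrant is `exp (-4 (s₁ + s₂) u - 8u³/3) / (64 π u³)`; the Hilbert–Schmidt bound is its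
square root.
-/

open MeasureTheory Real Filter

open Complex Topology

lemma intervalIntegral_neg_self_eq_two_mul_of_even {f : ℝ → ℝ} (hf : Continuous f)
    (heven : ∀ t, f (-t) = f t) (T : ℝ) :
    ∫ t in -T..T, f t = 2 * ∫ t in (0 : ℝ)..T, f t := by
  rw [← intervalIntegral.integral_add_adjacent_intervals (b := 0) (hf.intervalIntegrable _ _)
    (hf.intervalIntegrable _ _)]
  have : ∫ t in -T..0, f t = ∫ t in (0 : ℝ)..T, f t := by
    simpa [heven] using (intervalIntegral.integral_comp_neg (a := 0) (b := T) f).symm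
  rw [this]; ring

lemma setLIntegral_Ioi_ofReal_exp_mul {a : ℝ} (ha : a < 0) (c : ℝ) :
    ∫⁻ x in Set.Ioi c, ENNReal.ofReal (Real.exp (a * x)) =
      ENNReal.ofReal (-Real.exp (a * c) / a) := by
  rw [← ofReal_integral_eq_lintegral_ofReal (integrableOn_exp_mul_Ioi ha c)
    (ae_of_all _ fun _ => (Real.exp_pos _).le), integral_exp_mul_Ioi ha]

lemma setLIntegral_Ioi_setLIntegral_Ioi_le_of_le_exp {F : ℝ → ℝ → ℝ} {C a : ℝ}
    (hC : 0 ≤ C) (ha : 0 < a) (hF : ∀ x y, F x y ≤ C * Real.exp (-a * (x + y)))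
    (s₁ s₂ : ℝ) :
    ∫⁻ x in Set.Ioi s₂, ∫⁻ y in Set.Ioi s₁, ENNReal.ofReal (F x y) ≤
      ENNReal.ofReal (C * Real.exp (-a * (s₁ + s₂)) / a ^ 2) := by
  have hsplit (x y : ℝ) : ENNReal.ofReal (F x y) ≤
      ENNReal.ofReal (C * Real.exp (-a * x)) * ENNReal.ofReal (Real.exp (-a * y)) := by
    rw [← ENNReal.ofReal_mul (by positivity), mul_assoc, ← Real.exp_add, ← mul_add]
    exact ENNReal.ofReal_le_ofReal (hF x y)
  calc ∫⁻ x in Set.Ioi s₂, ∫⁻ y in Set.Ioi s₁, ENNReal.ofReal (F x y)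
      ≤ ∫⁻ x in Set.Ioi s₂, ∫⁻ y in Set.Ioi s₁,
          ENNReal.ofReal (C * Real.exp (-a * x)) * ENNReal.ofReal (Real.exp (-a * y)) :=
        lintegral_mono fun x => lintegral_mono fun y => hsplit x y
    _ = (∫⁻ x in Set.Ioi s₂, ENNReal.ofReal (C * Real.exp (-a * x))) *
          ∫⁻ y in Set.Ioi s₁, ENNReal.ofReal (Real.exp (-a * y)) :=
        lintegral_lintegral_mul (by fun_prop) (by fun_prop)
    _ = ENNReal.ofReal (C * Real.exp (-a * (s₁ + s₂)) / a ^ 2) := by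
        simp_rw [ENNReal.ofReal_mul hC]
        rw [lintegral_const_mul' _ _ ENNReal.ofReal_ne_top,
          setLIntegral_Ioi_ofReal_exp_mul (by linarith),
          setLIntegral_Ioi_ofReal_exp_mul (by linarith), neg_div_neg_eq, neg_div_neg_eq,
          ← ENNReal.ofReal_mul hC, ← ENNReal.ofReal_mul (by positivity)]
        congr 1
        rw [mul_add, Real.exp_add]
        ring

lemma HSnorm_ite_le_sqrt {G : ℝ → ℝ → ℝ} {a b B : ℝ} (hB : 0 ≤ B)
    (h : ∫⁻ x in Set.Ioi a, ∫⁻ y in Set.Ioi b, ENNReal.ofReal (G x y ^ 2) ≤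
      ENNReal.ofReal B) :
    HSnorm (fun x y => if a < x ∧ b < y then G x y else 0) ≤ √B := by
  have hite (x : ℝ) : ∫⁻ y, ENNReal.ofReal ((if a < x ∧ b < y then G x y else 0) ^ 2) =
      (Set.Ioi a).indicator (fun x => ∫⁻ y in Set.Ioi b, ENNReal.ofReal (G x y ^ 2)) x := by
    by_cases hx : a < x
    · rw [Set.indicator_of_mem (Set.mem_Ioi.2 hx), ← lintegral_indicator measurableSet_Ioi]
      congr 1 with y
      by_cases hy : b < y <;> simp [hx, hy]
    · simp [hx]
  refine Real.sqrt_le_sqrt (ENNReal.toReal_le_of_le_ofReal hB ?_)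
  calc ∫⁻ p : ℝ × ℝ, ENNReal.ofReal ((if a < p.1 ∧ b < p.2 then G p.1 p.2 else 0) ^ 2)
      ≤ ∫⁻ x, ∫⁻ y, ENNReal.ofReal ((if a < x ∧ b < y then G x y else 0) ^ 2) := by
        rw [Measure.volume_eq_prod]
        exact lintegral_prod_le _
    _ ≤ ENNReal.ofReal B := by
        simpa only [hite, lintegral_indicator measurableSet_Ioi] using h

noncomputable def airyIntegrand (x : ℝ) (z : ℂ) : ℂ := cexp (I * (z ^ 3 / 3 + x * z))

lemma differentiable_airyIntegrand (x : ℝ) : Differentiable ℂ (airyIntegrand x) := by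
  unfold airyIntegrand; fun_prop

lemma continuous_airyIntegrand (x : ℝ) : Continuous (airyIntegrand x) :=
  (differentiable_airyIntegrand x).continuous

lemma norm_airyIntegrand (x a b : ℝ) :
    ‖airyIntegrand x (a + b * I)‖ = Real.exp (b ^ 3 / 3 - x * b - a ^ 2 * b) := by
  rw [airyIntegrand, Complex.norm_exp]
  congr 1
  simp [pow_succ, Complex.mul_re, Complex.mul_im]
  ring

lemma re_airyIntegrand_ofReal (x t : ℝ) :
    (airyIntegrand x t).re = Real.cos (t ^ 3 / 3 + x * t) := by
  rw [airyIntegrand, ← Complex.exp_ofReal_mul_I_re]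
  congr 2
  push_cast
  ring

lemma norm_airyIntegrand_add_mul_I (x v t : ℝ) :
    ‖airyIntegrand x (t + v * I)‖ = Real.exp (v ^ 3 / 3 - x * v) * Real.exp (-v * t ^ 2) := by
  rw [norm_airyIntegrand, ← Real.exp_add]
  ring_nf

lemma integrable_airyIntegrand_add_mul_I (x : ℝ) {v : ℝ} (hv : 0 < v) :
    Integrable (fun t : ℝ => airyIntegrand x (t + v * I)) := by
  refine ((integrable_exp_neg_mul_sq hv).const_mul (Real.exp (v ^ 3 / 3 - x * v))).mono'
    ((continuous_airyIntegrand x).comp (by fun_prop)).aestronglyMeasurable ?_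
  exact .of_forall fun t => (norm_airyIntegrand_add_mul_I x v t).le

lemma integral_norm_airyIntegrand_add_mul_I (x v : ℝ) :
    ∫ t : ℝ, ‖airyIntegrand x (t + v * I)‖ =
      Real.exp (v ^ 3 / 3 - x * v) * √(π / v) := by
  simp_rw [norm_airyIntegrand_add_mul_I, integral_const_mul, integral_gaussian]

lemma norm_integral_airyIntegrand_vertical_le (x a : ℝ) {v : ℝ} (hv : 0 ≤ v) (ha : a ≠ 0) :
    ‖∫ y in (0 : ℝ)..v, airyIntegrand x (a + y * I)‖ ≤
      Real.exp (v ^ 3 / 3 + |x| * v) / a ^ 2 := by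
  have hexp : IntegrableOn (fun y : ℝ => Real.exp (-a ^ 2 * y)) (Set.Ioi 0) :=
    integrableOn_exp_mul_Ioi (neg_neg_of_pos (by positivity)) 0
  calc ‖∫ y in (0 : ℝ)..v, airyIntegrand x (a + y * I)‖
      ≤ ∫ y in (0 : ℝ)..v, Real.exp (v ^ 3 / 3 + |x| * v) * Real.exp (-a ^ 2 * y) := by
        refine intervalIntegral.norm_integral_le_of_norm_le hv (.of_forall fun y hy => ?_)
          ((by fun_prop : Continuous _).intervalIntegrable _ _)
        rw [norm_airyIntegrand, ← Real.exp_add]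
        gcongr
        have hxy : -(x * y) ≤ |x| * v := by
          calc -(x * y) ≤ |x| * |y| := by rw [← abs_mul]; exact neg_le_abs _
            _ ≤ |x| * v := by rw [abs_of_pos hy.1]; gcongr; exact hy.2
        nlinarith [pow_le_pow_left₀ hy.1.le hy.2 3]
    _ = Real.exp (v ^ 3 / 3 + |x| * v) * ∫ y in Set.Ioc 0 v, Real.exp (-a ^ 2 * y) := by
        rw [intervalIntegral.integral_const_mul, intervalIntegral.integral_of_le hv]
    _ ≤ Real.exp (v ^ 3 / 3 + |x| * v) * ∫ y in Set.Ioi 0, Real.exp (-a ^ 2 * y) := by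
        gcongr
        · exact ae_of_all _ fun _ => (Real.exp_pos _).le
        · exact Set.Ioc_subset_Ioi_self
    _ = Real.exp (v ^ 3 / 3 + |x| * v) / a ^ 2 := by
        rw [integral_exp_mul_Ioi (neg_neg_of_pos (by positivity))]
        field_simp
        simp

lemma tendsto_integral_airyIntegrand_vertical (x : ℝ) {v : ℝ} (hv : 0 ≤ v) :
    Tendsto (fun a : ℝ => ∫ y in (0 : ℝ)..v, airyIntegrand x (a + y * I)) (cocompact ℝ)
      (𝓝 0) := by
  have hsq : Tendsto (fun a : ℝ => a ^ 2) (cocompact ℝ) atTop := by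
    refine ((tendsto_pow_atTop two_ne_zero).comp tendsto_norm_cocompact_atTop).congr fun a => ?_
    simp [Real.norm_eq_abs, sq_abs]
  refine squeeze_zero_norm' ?_
    ((tendsto_const_nhds (x := Real.exp (v ^ 3 / 3 + |x| * v))).div_atTop hsq)
  filter_upwards [hsq.eventually_gt_atTop 0] with a ha
  exact norm_integral_airyIntegrand_vertical_le x a hv (by rintro rfl; simp at ha)

/-- Cauchy's theorem on the rectangle with corners `±T` and `±T + v i`. -/
lemma intervalIntegral_airyIntegrand_eq_shift (x T v : ℝ) :
    ∫ t in -T..T, airyIntegrand x t =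
      (∫ t in -T..T, airyIntegrand x (t + v * I))
        - I * (∫ y in (0 : ℝ)..v, airyIntegrand x (T + y * I))
        + I * (∫ y in (0 : ℝ)..v, airyIntegrand x (-T + y * I)) := by
  have := Complex.integral_boundary_rect_eq_zero_of_differentiableOn (airyIntegrand x) (-T)
    (T + v * I) (differentiable_airyIntegrand x).differentiableOn
  simp only [neg_re, ofReal_re, neg_im, ofReal_im, add_re, add_im, mul_re, mul_im, I_re, I_im,
    neg_zero, ofReal_zero, zero_mul, add_zero, mul_zero, mul_one, sub_zero, zero_add, smul_eq_mul,
    ofReal_neg] at this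
  linear_combination this

lemma tendsto_intervalIntegral_airyIntegrand (x : ℝ) {v : ℝ} (hv : 0 < v) :
    Tendsto (fun T : ℝ => ∫ t in -T..T, airyIntegrand x t) atTop
      (𝓝 (∫ t : ℝ, airyIntegrand x (t + v * I))) := by
  have hvert := tendsto_integral_airyIntegrand_vertical x hv.le
  have hright := (hvert.mono_left atTop_le_cocompact).const_mul I
  have hleft := ((hvert.mono_left atBot_le_cocompact).comp tendsto_neg_atTop_atBot).const_mul I
  have hhoriz := intervalIntegral_tendsto_integral (integrable_airyIntegrand_add_mul_I x hv)
    tendsto_neg_atTop_atBot tendsto_id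
  have hlim := (hhoriz.sub hright).add hleft
  rw [mul_zero, sub_zero, add_zero] at hlim
  refine hlim.congr fun T => ?_
  simp only [intervalIntegral_airyIntegrand_eq_shift x T v, id, Function.comp_apply, ofReal_neg]

lemma Ai_eq_re_integral (x : ℝ) {v : ℝ} (hv : 0 < v) :
    Ai x = (∫ t : ℝ, airyIntegrand x (t + v * I)).re / (2 * π) := by
  refine Tendsto.limUnder_eq ?_
  have hre (T : ℝ) : (∫ t in -T..T, airyIntegrand x t).re =
      2 * ∫ t in (0 : ℝ)..T, Real.cos (t ^ 3 / 3 + x * t) := by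
    have hint : IntervalIntegrable (fun t : ℝ => airyIntegrand x t) volume (-T) T :=
      ((continuous_airyIntegrand x).comp continuous_ofReal).intervalIntegrable _ _
    rw [← RCLike.re_to_complex, ← intervalIntegral.intervalIntegral_re hint]
    simp only [RCLike.re_to_complex, re_airyIntegrand_ofReal]
    exact intervalIntegral_neg_self_eq_two_mul_of_even (by fun_prop)
      (fun t => by rw [← Real.cos_neg]; ring_nf) T
  refine (((continuous_re.tendsto _).comp (tendsto_intervalIntegral_airyIntegrand x hv)).div_const
    (2 * π)).congr fun T => ?_
  rw [Function.comp_apply, hre]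
  field_simp

lemma abs_Ai_le (x : ℝ) {v : ℝ} (hv : 0 < v) :
    |Ai x| ≤ Real.exp (v ^ 3 / 3 - x * v) * √(π / v) / (2 * π) := by
  rw [Ai_eq_re_integral x hv, abs_div, abs_of_pos (by positivity : (0 : ℝ) < 2 * π),
    ← integral_norm_airyIntegrand_add_mul_I]
  gcongr
  exact (abs_re_le_norm _).trans (norm_integral_le_integral_norm _)

lemma Ai_sq_le (x : ℝ) {v : ℝ} (hv : 0 < v) :
    Ai x ^ 2 ≤ Real.exp (2 * (v ^ 3 / 3 - x * v)) / (4 * π * v) := by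
  calc Ai x ^ 2 = |Ai x| ^ 2 := (sq_abs _).symm
    _ ≤ (Real.exp (v ^ 3 / 3 - x * v) * √(π / v) / (2 * π)) ^ 2 := by
        gcongr; exact abs_Ai_le x hv
    _ = Real.exp (2 * (v ^ 3 / 3 - x * v)) / (4 * π * v) := by
        rw [div_pow, mul_pow, Real.sq_sqrt (by positivity), ← Real.exp_nat_mul]
        field_simp
        ring_nf

lemma Ai_sq_mul_exp_le (x y : ℝ) {u : ℝ} (hu : 0 < u) :
    Ai (x + y + u ^ 2) ^ 2 * Real.exp (-2 * (x + y) * u - 4 * u ^ 3 / 3) ≤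
      Real.exp (-8 * u ^ 3 / 3) / (4 * π * u) * Real.exp (-(4 * u) * (x + y)) := by
  calc Ai (x + y + u ^ 2) ^ 2 * Real.exp (-2 * (x + y) * u - 4 * u ^ 3 / 3)
      ≤ Real.exp (2 * (u ^ 3 / 3 - (x + y + u ^ 2) * u)) / (4 * π * u) *
          Real.exp (-2 * (x + y) * u - 4 * u ^ 3 / 3) := by
        gcongr; exact Ai_sq_le _ hu
    _ = Real.exp (-8 * u ^ 3 / 3) / (4 * π * u) * Real.exp (-(4 * u) * (x + y)) := by
        rw [div_mul_eq_mul_div, ← Real.exp_add, div_mul_eq_mul_div, ← Real.exp_add]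
        ring_nf

lemma setLIntegral_Ai_sq_mul_exp_le (s₁ s₂ : ℝ) {u : ℝ} (hu : 0 < u) :
    ∫⁻ x in Set.Ioi s₂, ∫⁻ y in Set.Ioi s₁,
        ENNReal.ofReal (Ai (x + y + u ^ 2) ^ 2 * Real.exp (-2 * (x + y) * u - 4 * u ^ 3 / 3)) ≤
      ENNReal.ofReal (1 / (4 * u ^ 3) * Real.exp (-4 * (s₁ + s₂) * u - 8 * u ^ 3 / 3)) := by
  refine (setLIntegral_Ioi_setLIntegral_Ioi_le_of_le_exp (by positivity) (by positivity)
    (fun x y => Ai_sq_mul_exp_le x y hu) s₁ s₂).trans (ENNReal.ofReal_le_ofReal ?_)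
  have hπ : 1 / (16 * π) ≤ 1 := by
    rw [div_le_one (by positivity)]
    linarith [pi_gt_three]
  calc _ = 1 / (16 * π) *
        (1 / (4 * u ^ 3) * Real.exp (-4 * (s₁ + s₂) * u - 8 * u ^ 3 / 3)) := by
        rw [mul_comm _ (Real.exp _), ← mul_div_assoc, ← Real.exp_add]
        field_simp
        ring_nf
    _ ≤ _ := mul_le_of_le_one_left (by positivity) hπ

theorem K21_HS_bound_general (s₁ s₂ u : ℝ) (hu : 0 < u) :
    (∫⁻ x in Set.Ioi s₂, ∫⁻ y in Set.Ioi s₁,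
        ENNReal.ofReal (Ai (x + y + u ^ 2) ^ 2 *
          Real.exp (-2 * (x + y) * u - 4 * u ^ 3 / 3))) ≤
      ENNReal.ofReal (1 / (4 * u ^ 3) *
        Real.exp (-4 * (s₁ + s₂) * u - 8 * u ^ 3 / 3)) ∧
    HSnorm (fun x y => if s₂ < x ∧ s₁ < y then
        Ai (x + y + u ^ 2) * Real.exp (-(x + y) * u - 2 * u ^ 3 / 3) else 0) ≤
      1 / (2 * u ^ ((3 : ℝ) / 2)) * Real.exp (-2 * (s₁ + s₂) * u - 4 * u ^ 3 / 3) := by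
  have hdouble := setLIntegral_Ai_sq_mul_exp_le s₁ s₂ hu
  refine ⟨hdouble, ?_⟩
  have hsq : 1 / (4 * u ^ 3) * Real.exp (-4 * (s₁ + s₂) * u - 8 * u ^ 3 / 3) =
      (1 / (2 * u ^ ((3 : ℝ) / 2)) * Real.exp (-2 * (s₁ + s₂) * u - 4 * u ^ 3 / 3)) ^ 2 := by
    have hu32 : (u ^ ((3 : ℝ) / 2)) ^ 2 = u ^ 3 := by
      rw [← Real.rpow_natCast, ← Real.rpow_mul hu.le]
      norm_num
    rw [mul_pow, div_pow, mul_pow, hu32, ← Real.exp_nat_mul]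
    ring_nf
  have hkernel (x y : ℝ) : (Ai (x + y + u ^ 2) * Real.exp (-(x + y) * u - 2 * u ^ 3 / 3)) ^ 2 =
      Ai (x + y + u ^ 2) ^ 2 * Real.exp (-2 * (x + y) * u - 4 * u ^ 3 / 3) := by
    rw [mul_pow, ← Real.exp_nat_mul]
    ring_nf
  calc _ ≤ √(1 / (4 * u ^ 3) * Real.exp (-4 * (s₁ + s₂) * u - 8 * u ^ 3 / 3)) :=
        HSnorm_ite_le_sqrt (by positivity) (by simpa only [hkernel] using hdouble)
    _ = _ := by rw [hsq, Real.sqrt_sq (by positivity)]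

/-- Lemma 3.9: for `s₁, s₂ ≥ 0` and `u > 0`,
`∫_{s₂}^∞∫_{s₁}^∞ Ai(x+y+u²)² e^{-2(x+y)u − 4u³/3} ≤ (4u³)^{-1} e^{-4(s₁+s₂)u − 8u³/3}`;
i.e. the Hilbert–Schmidt norm of `K_{2,1}` is at most
`(2u^{3/2})^{-1} e^{-2(s₁+s₂)u − 4u³/3}`. -/
theorem K21_HS_bound (s₁ s₂ u : ℝ) (hs₁ : 0 ≤ s₁) (hs₂ : 0 ≤ s₂) (hu : 0 < u) :
    (∫⁻ x in Set.Ioi s₂, ∫⁻ y in Set.Ioi s₁,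
        ENNReal.ofReal (Ai (x + y + u ^ 2) ^ 2 *
          Real.exp (-2 * (x + y) * u - 4 * u ^ 3 / 3))) ≤
      ENNReal.ofReal (1 / (4 * u ^ 3) *
        Real.exp (-4 * (s₁ + s₂) * u - 8 * u ^ 3 / 3)) ∧
    HSnorm (fun x y => if s₂ < x ∧ s₁ < y then
        Ai (x + y + u ^ 2) * Real.exp (-(x + y) * u - 2 * u ^ 3 / 3) else 0) ≤
      1 / (2 * u ^ ((3 : ℝ) / 2)) * Real.exp (-2 * (s₁ + s₂) * u - 4 * u ^ 3 / 3) :=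
  K21_HS_bound_general s₁ s₂ u hu
end
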